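/- arXiv:2006.12545 — 4 statements merged into one kernel-verified Lean document; each statement's English description precedes it below -/
import Mathlib

section
/- Let f be a complex polynomial, not identically zero, let m be the number of zeros of f in the open unit disk {|z| < 1} counted with multiplicity, and let λ be the number of zeros of f on the unit circle {|z| = 1} counted with multiplicity. Then the number of θ ∈ [0, 2π) such that Re(f(e^{iθ})) = 0 is at least 2m + λ. -/
/-!
Over `ℂ`, `f = c ∏ (X - r)` over its roots. On the unit circle each factor `e^{iθ} - r` is a real
multiple of `e^{iφ_r(θ)}` for a continuous phase `φ_r` that grows by `2π`, `π` or `0` as `θ` runs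
once around the circle, according as `|r| < 1`, `|r| = 1` or `|r| > 1`: write the factor as
`e^{iθ} (1 - r e^{-iθ})`, as `2 sin((θ - α)/2) e^{i(θ + α + π)/2}` when `r = e^{iα}`, or as
`-r (1 - e^{iθ}/r)`, where the factors `1 - w` with `|w| < 1` have a continuous argument.
Hence `f(e^{iθ})` is a real multiple of `e^{iΦ(θ)}` with `Φ` continuous and
`Φ(2π) = Φ(0) + (2m + λ)π`, so by the intermediate value theorem `Φ` meets `2m + λ` distinct odd
multiples of `π/2` on `[0, 2π)`, and there `Re f(e^{iθ}) = 0`.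

Since `Set.ncard` of an infinite set is `0`, that case needs a separate argument: if
`Re f(z) = 0` at infinitely many `z` on the circle, then `f` is constant, so `m = λ = 0`.
-/

open Polynomial Complex Set
open scoped Real

/-- `φ x` is an argument of `F x` modulo `π`. -/
def HasPhase {α : Type*} (F : α → ℂ) (φ : α → ℝ) : Prop :=
  ∀ x, ∃ t : ℝ, F x = t * exp (φ x * I)

lemma hasPhase_arg {α : Type*} (F : α → ℂ) : HasPhase F fun x => (F x).arg :=
  fun x => ⟨‖F x‖, (norm_mul_exp_arg_mul_I (F x)).symm⟩

lemma hasPhase_exp_mul_I : HasPhase (fun θ : ℝ => exp (θ * I)) id :=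
  fun _ => ⟨1, by simp⟩

namespace HasPhase

variable {α : Type*} {F G : α → ℂ} {φ ψ : α → ℝ}

lemma mul (hF : HasPhase F φ) (hG : HasPhase G ψ) :
    HasPhase (fun x => F x * G x) (fun x => φ x + ψ x) := by
  intro x
  obtain ⟨s, hs⟩ := hF x
  obtain ⟨t, ht⟩ := hG x
  refine ⟨s * t, ?_⟩
  simp only [hs, ht, ofReal_add, add_mul, exp_add]
  push_cast
  ring

lemma multiset_prod {ι : Type*} (s : Multiset ι) {F : ι → α → ℂ} {φ : ι → α → ℝ}
    (h : ∀ i, HasPhase (F i) (φ i)) :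
    HasPhase (fun x => (s.map fun i => F i x).prod) (fun x => (s.map fun i => φ i x).sum) := by
  induction s using Multiset.induction_on with
  | empty => exact fun _ => ⟨1, by simp⟩
  | cons i s ih =>
    simpa only [Multiset.map_cons, Multiset.prod_cons, Multiset.sum_cons] using (h i).mul ih

lemma re_eq_zero (h : HasPhase F φ) {x : α} (hx : Real.cos (φ x) = 0) : (F x).re = 0 := by
  obtain ⟨t, ht⟩ := h x
  rw [ht, re_ofReal_mul, exp_ofReal_mul_I_re, hx, mul_zero]

end HasPhase

lemma exp_mul_I_sub_exp_mul_I (θ α : ℝ) :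
    exp (θ * I) - exp (α * I) =
      (2 * Real.sin ((θ - α) / 2) : ℝ) * exp (((θ + α + π) / 2 : ℝ) * I) := by
  obtain ⟨u, v, rfl, rfl⟩ : ∃ u v : ℝ, θ = u + v ∧ α = u - v :=
    ⟨(θ + α) / 2, (θ - α) / 2, by ring, by ring⟩
  rw [show (u + v - (u - v)) / 2 = v by ring, show (u + v + (u - v) + π) / 2 = u + π / 2 by ring]
  have hI : exp ((π / 2 : ℝ) * I) = I := by simp [exp_mul_I]
  push_cast at hI ⊢
  rw [add_mul, add_mul, sub_mul, exp_add, exp_add, exp_sub, hI, sin, neg_mul, exp_neg]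
  field_simp
  linear_combination (exp (I * v) ^ 2 - 1) * I_sq

lemma continuousAt_arg_one_sub {α : Type*} [TopologicalSpace α] {g : α → ℂ} {x : α}
    (hg : ContinuousAt g x) (hx : ‖g x‖ < 1) : ContinuousAt (fun y => (1 - g y).arg) x := by
  refine (continuousAt_arg ?_).comp (continuousAt_const.sub hg)
  simpa [sub_eq_add_neg] using mem_slitPlane_of_norm_lt_one (z := -g x) (by simpa using hx)

noncomputable def rootPhase (r : ℂ) (θ : ℝ) : ℝ :=
  if ‖r‖ < 1 then θ + (1 - r / exp (θ * I)).arg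
  else if ‖r‖ = 1 then (θ + r.arg + π) / 2
  else (-r).arg + (1 - exp (θ * I) / r).arg

noncomputable def rootWinding (r : ℂ) : ℕ :=
  if ‖r‖ < 1 then 2 else if ‖r‖ = 1 then 1 else 0

lemma hasPhase_rootPhase (r : ℂ) : HasPhase (fun θ : ℝ => exp (θ * I) - r) (rootPhase r) := by
  unfold rootPhase
  rcases lt_trichotomy ‖r‖ 1 with h | h | h
  · simp only [if_pos h]
    convert hasPhase_exp_mul_I.mul (hasPhase_arg fun θ : ℝ => 1 - r / exp (θ * I)) using 2
    · field_simp
    · rfl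
  · simp only [if_neg h.not_lt, if_pos h]
    intro θ
    have hr : r = exp (r.arg * I) := by simpa [h] using (norm_mul_exp_arg_mul_I r).symm
    exact ⟨_, by simpa only [← hr] using exp_mul_I_sub_exp_mul_I θ r.arg⟩
  · have hr : r ≠ 0 := norm_pos_iff.mp (by linarith)
    simp only [if_neg (lt_asymm h), if_neg h.ne']
    convert (hasPhase_arg fun _ : ℝ => -r).mul (hasPhase_arg fun θ : ℝ => 1 - exp (θ * I) / r)
      using 2
    field_simp
    ring

lemma continuous_rootPhase (r : ℂ) : Continuous (rootPhase r) := by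
  unfold rootPhase
  rcases lt_trichotomy ‖r‖ 1 with h | h | h
  · simp only [if_pos h]
    refine continuous_id.add (continuous_iff_continuousAt.2 fun θ => ?_)
    exact continuousAt_arg_one_sub
      (continuous_const.div (by fun_prop) fun _ => exp_ne_zero _).continuousAt
      (by simpa [norm_div] using h)
  · simp only [if_neg h.not_lt, if_pos h]
    fun_prop
  · simp only [if_neg (lt_asymm h), if_neg h.ne']
    refine continuous_const.add (continuous_iff_continuousAt.2 fun θ => ?_)
    exact continuousAt_arg_one_sub (by fun_prop)
      (by rwa [norm_div, norm_exp_ofReal_mul_I, div_lt_one (by linarith)])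

lemma rootPhase_add_two_pi (r : ℂ) (θ : ℝ) :
    rootPhase r (θ + 2 * π) = rootPhase r θ + π * rootWinding r := by
  have hexp : exp ((θ + 2 * π : ℝ) * I) = exp (θ * I) :=
    congrArg Subtype.val (Circle.exp_add_two_pi θ)
  unfold rootPhase rootWinding
  rcases lt_trichotomy ‖r‖ 1 with h | h | h
  · simp only [if_pos h, hexp]
    push_cast
    ring
  · simp only [if_neg h.not_lt, if_pos h]
    push_cast
    ring
  · simp only [if_neg (lt_asymm h), if_neg h.ne', hexp]
    push_cast
    ring

lemma sum_map_rootWinding (s : Multiset ℂ) :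
    (s.map rootWinding).sum =
      2 * Multiset.card (s.filter fun z => ‖z‖ < 1) +
        Multiset.card (s.filter fun z => ‖z‖ = 1) := by
  induction s using Multiset.induction_on with
  | empty => simp
  | cons r s ih =>
    rw [Multiset.map_cons, Multiset.sum_cons, ih, rootWinding]
    rcases lt_trichotomy ‖r‖ 1 with h | h | h
    · simp only [h, h.ne, ↓reduceIte, Multiset.filter_cons_of_pos, Multiset.filter_cons_of_neg,
        Multiset.card_cons, not_false_eq_true]
      ring
    · simp only [h, lt_self_iff_false, ↓reduceIte, Multiset.filter_cons_of_pos,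
        Multiset.filter_cons_of_neg, Multiset.card_cons, not_false_eq_true]
      ring
    · simp [lt_asymm h, h.ne']

noncomputable def circlePhase (f : ℂ[X]) (θ : ℝ) : ℝ :=
  f.leadingCoeff.arg + (f.roots.map fun r => rootPhase r θ).sum

lemma hasPhase_circlePhase (f : ℂ[X]) :
    HasPhase (fun θ : ℝ => f.eval (exp (θ * I))) (circlePhase f) := by
  simp only [(IsAlgClosed.splits f).eval_eq_prod_roots]
  exact (hasPhase_arg fun _ => f.leadingCoeff).mul
    (HasPhase.multiset_prod f.roots fun r => hasPhase_rootPhase r)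

lemma continuous_circlePhase (f : ℂ[X]) : Continuous (circlePhase f) :=
  continuous_const.add <| continuous_multiset_sum _ fun _ _ => continuous_rootPhase _

lemma circlePhase_add_two_pi (f : ℂ[X]) (θ : ℝ) :
    circlePhase f (θ + 2 * π) = circlePhase f θ + π *
      (2 * Multiset.card (f.roots.filter fun z => ‖z‖ < 1) +
        Multiset.card (f.roots.filter fun z => ‖z‖ = 1) : ℕ) := by
  simp only [circlePhase, rootPhase_add_two_pi, Multiset.sum_map_add, ← sum_map_rootWinding,
    Nat.cast_multiset_sum, Multiset.map_map, Function.comp_def, Multiset.sum_map_mul_left]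
  ring

lemma exists_mem_Ico_forall_cos_add_pi_mul_eq_zero (A : ℝ) :
    ∃ x₀ ∈ Ico A (A + π), ∀ k : ℕ, Real.cos (x₀ + π * k) = 0 := by
  refine ⟨toIcoMod Real.pi_pos A (π / 2), toIcoMod_mem_Ico _ _ _, fun k => ?_⟩
  have hdiv := self_sub_toIcoMod Real.pi_pos A (π / 2)
  rw [zsmul_eq_mul] at hdiv
  rw [Real.cos_eq_zero_iff]
  refine ⟨k - toIcoDiv Real.pi_pos A (π / 2), ?_⟩
  push_cast
  linarith

lemma le_encard_cos_eq_zero {G : ℝ → ℝ} {a b : ℝ} (hab : a ≤ b) (hG : ContinuousOn G (Icc a b))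
    {N : ℕ} (hN : G a + π * N ≤ G b) :
    (N : ℕ∞) ≤ {x | x ∈ Ico a b ∧ Real.cos (G x) = 0}.encard := by
  obtain ⟨x₀, ⟨hx₀a, hx₀b⟩, hcos⟩ := exists_mem_Ico_forall_cos_add_pi_mul_eq_zero (G a)
  have hlt : ∀ k : Fin N, x₀ + π * k < G b := fun k => by
    have : π * ((k : ℕ) + 1 : ℕ) ≤ π * N := by gcongr; exact k.2
    push_cast at this
    linarith
  have hex : ∀ k : Fin N, ∃ x ∈ Icc a b, G x = x₀ + π * k := fun k =>
    intermediate_value_Icc hab hG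
      ⟨le_add_of_le_of_nonneg hx₀a (by positivity), (hlt k).le⟩
  choose ψ hψ hGψ using hex
  have hψ_inj : Function.Injective ψ := fun k j hkj => by
    have := congrArg G hkj
    rw [hGψ, hGψ] at this
    exact Fin.ext (by exact_mod_cast mul_left_cancel₀ Real.pi_ne_zero (add_left_cancel this))
  calc (N : ℕ∞) = ENat.card (Fin N) := by simp
    _ ≤ (range ψ).encard := hψ_inj.encard_range
    _ ≤ _ := encard_le_encard <| by
      rintro _ ⟨k, rfl⟩
      refine ⟨⟨(hψ k).1, (hψ k).2.lt_of_ne fun hb => ?_⟩, by rw [hGψ]; exact hcos k⟩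
      exact (hlt k).ne (by rw [← hGψ, hb])

lemma eval_reflect_map_conj {f : ℂ[X]} {n : ℕ} (hn : f.natDegree ≤ n) {z : ℂ} (hz : ‖z‖ = 1) :
    (reflect n (f.map (starRingEnd ℂ))).eval z = z ^ n * starRingEnd ℂ (f.eval z) := by
  have hz' : z * starRingEnd ℂ z = 1 := by simp [mul_conj', hz]
  let : Invertible (starRingEnd ℂ z) := ⟨z, hz', by rw [mul_comm, hz']⟩
  have h := eval₂_reflect_mul_pow (starRingEnd ℂ) (starRingEnd ℂ z) n f hn
  rw [eval₂_at_apply] at h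
  rw [reflect_map, eval_map, ← h, mul_left_comm, ← mul_pow, hz', one_pow, mul_one]
  rfl

lemma natDegree_eq_zero_of_infinite_re_eval_eq_zero (f : ℂ[X])
    (h : {z : ℂ | ‖z‖ = 1 ∧ (f.eval z).re = 0}.Infinite) : f.natDegree = 0 := by
  set n := f.natDegree
  by_contra hn
  -- On the unit circle `g z = 2 z ^ n Re (f z)`, and `X ^ (2n)` has coefficient `f.leadingCoeff`.
  set g := X ^ n * f + reflect n (f.map (starRingEnd ℂ))
  have hg : g.coeff (n + n) ≠ 0 := by
    rw [coeff_add, coeff_X_pow_mul, coeff_reflect, revAt_eq_self_of_lt (by omega), coeff_map,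
      coeff_eq_zero_of_natDegree_lt (by omega : n < n + n), map_zero, add_zero]
    exact leadingCoeff_ne_zero.2 fun h0 => hn (by simp [n, h0])
  have hroots : {z : ℂ | ‖z‖ = 1 ∧ (f.eval z).re = 0} ⊆ {z | g.IsRoot z} := by
    rintro z ⟨hz, hre⟩
    rw [mem_ofPred_eq, IsRoot, eval_add, eval_mul, eval_X_pow, eval_reflect_map_conj le_rfl hz,
      ← mul_add, add_conj, hre, mul_zero, ofReal_zero, mul_zero]
  exact hg (by rw [eq_zero_of_infinite_isRoot g (h.mono hroots), coeff_zero])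

theorem real_part_zeros_on_circle_general
    (f : Polynomial ℂ) :
    2 * Multiset.card (f.roots.filter fun z => ‖z‖ < 1) +
        Multiset.card (f.roots.filter fun z => ‖z‖ = 1) ≤
      Set.ncard {θ : ℝ | θ ∈ Ico 0 (2 * Real.pi) ∧
        (f.eval (Complex.exp (θ * Complex.I))).re = 0} := by
  set S := {θ : ℝ | θ ∈ Ico 0 (2 * π) ∧ (f.eval (exp (θ * I))).re = 0}
  obtain hS | hS := S.finite_or_infinite
  · have hwind := circlePhase_add_two_pi f 0
    rw [zero_add] at hwind
    have hcos := le_encard_cos_eq_zero Real.two_pi_pos.le (continuous_circlePhase f).continuousOn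
      hwind.ge
    rw [← Nat.cast_le (α := ℕ∞), hS.cast_ncard_eq]
    exact hcos.trans <| encard_le_encard fun θ hθ =>
      ⟨hθ.1, (hasPhase_circlePhase f).re_eq_zero hθ.2⟩
  · have hinj : InjOn (fun θ : ℝ => exp (θ * I)) S :=
      (Subtype.val_injective.comp_injOn (Circle.exp_injOn_Ico (by simp))).mono fun _ hθ => hθ.1
    have hconst := natDegree_eq_zero_of_infinite_re_eval_eq_zero f <|
      (hS.image hinj).mono <| by
        rintro _ ⟨θ, hθ, rfl⟩
        exact ⟨norm_exp_ofReal_mul_I θ, hθ.2⟩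
    have hroots : f.roots = 0 := by rw [eq_C_of_natDegree_eq_zero hconst, roots_C]
    simp [hroots]

/-- Let `f` be a nonzero complex polynomial, `m` the number of zeros of `f` in
the open unit disk and `lam` the number of zeros of `f` on the unit circle, both
counted with multiplicity.  Then the number of `θ ∈ [0, 2π)` with
`Re (f (e^{iθ})) = 0` is at least `2m + lam`. -/
theorem real_part_zeros_on_circle
    (f : Polynomial ℂ) (hf : f ≠ 0) :
    2 * Multiset.card (f.roots.filter fun z => ‖z‖ < 1) +
        Multiset.card (f.roots.filter fun z => ‖z‖ = 1) ≤
      Set.ncard {θ : ℝ | θ ∈ Ico 0 (2 * Real.pi) ∧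
        (f.eval (Complex.exp (θ * Complex.I))).re = 0} :=
  real_part_zeros_on_circle_general f
end

section
/- Let f be holomorphic and not identically zero on a neighborhood of z₀ ∈ ℂ, with a zero of order λ ≥ 1 at z₀. Then there exist C > 0 and ε₀ > 0 such that for all 0 < ε < ε₀ and all θ ∈ [0, 2π], f(z₀ + ε e^{iθ}) ≠ 0 and |Im( i ε e^{iθ} f′(z₀ + ε e^{iθ}) / f(z₀ + ε e^{iθ}) ) − λ| ≤ C ε. In particular, for ε small enough the derivative with respect to θ of any continuous branch of arg f(z₀ + ε e^{iθ}) is strictly positive on all of [0, 2π]. -/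
/-! Writing `w = z - z₀`, the factorization `f = w ^ λ g` gives `f'/f = λ / w + g'/g`, so
`i w f'/f = i λ + i w g'/g`. The imaginary part is therefore `λ` up to `|w| |g'/g|`, and `g'/g` is
continuous, hence bounded, near `z₀` because `g z₀ ≠ 0`. On the circle `|w| = ε` this is the
`O(ε)` estimate, and once `C ε < 1 ≤ λ` the imaginary part is positive. -/

open Complex Set Filter Topology

theorem logDeriv_eq_of_eventuallyEq_sub_pow_mul {f g : ℂ → ℂ} {z₀ u : ℂ} {n : ℕ}
    (hfac : f =ᶠ[𝓝 u] fun v => (v - z₀) ^ n * g v) (hu : u ≠ z₀) (hgu : g u ≠ 0)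
    (hg : DifferentiableAt ℂ g u) :
    logDeriv f u = n / (u - z₀) + logDeriv g u := by
  have hsub : u - z₀ ≠ 0 := sub_ne_zero.2 hu
  rw [(logDeriv_congr_nhds hfac).eq_of_nhds,
    logDeriv_mul (f := fun v => (v - z₀) ^ n) u (pow_ne_zero n hsub) hgu (by fun_prop) hg,
    logDeriv_fun_pow (by fun_prop)]
  simp [logDeriv_apply, div_eq_mul_inv]

theorem ne_zero_and_abs_im_I_mul_deriv_div_sub_le {f g : ℂ → ℂ} {z₀ w : ℂ} {n : ℕ}
    (hfac : f =ᶠ[𝓝 (z₀ + w)] fun v => (v - z₀) ^ n * g v) (hw : w ≠ 0) (hg0 : g (z₀ + w) ≠ 0)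
    (hg : DifferentiableAt ℂ g (z₀ + w)) :
    f (z₀ + w) ≠ 0 ∧
      |(I * w * deriv f (z₀ + w) / f (z₀ + w)).im - n| ≤ ‖w‖ * ‖logDeriv g (z₀ + w)‖ := by
  refine ⟨by rw [hfac.eq_of_nhds, add_sub_cancel_left]; exact mul_ne_zero (pow_ne_zero _ hw) hg0, ?_⟩
  rw [mul_div_assoc, ← logDeriv_apply,
    logDeriv_eq_of_eventuallyEq_sub_pow_mul hfac (by simpa using hw) hg0 hg, add_sub_cancel_left,
    mul_add, mul_assoc I w, mul_div_cancel₀ _ hw]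
  calc |(I * n + I * w * logDeriv g (z₀ + w)).im - n|
      = |(I * w * logDeriv g (z₀ + w)).im| := by simp
    _ ≤ ‖I * w * logDeriv g (z₀ + w)‖ := abs_im_le_norm _
    _ = ‖w‖ * ‖logDeriv g (z₀ + w)‖ := by simp

theorem eventually_ne_zero_and_norm_logDeriv_lt {g : ℂ → ℂ} {z₀ : ℂ} (hg : AnalyticAt ℂ g z₀)
    (hgz₀ : g z₀ ≠ 0) :
    ∀ᶠ u in 𝓝 z₀, g u ≠ 0 ∧ ‖logDeriv g u‖ < ‖logDeriv g z₀‖ + 1 := by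
  have hcont : ContinuousAt (logDeriv g) z₀ :=
    hg.deriv.continuousAt.div hg.continuousAt hgz₀
  exact (hg.continuousAt.eventually_ne hgz₀).and
    (hcont.norm.eventually (gt_mem_nhds (lt_add_one _)))

theorem arg_derivative_near_zero_of_order_general
    (f g : ℂ → ℂ) (z₀ : ℂ) (U : Set ℂ) (hU : IsOpen U) (hz₀ : z₀ ∈ U)
    (hg : DifferentiableOn ℂ g U)
    (lam : ℕ) (hlam : 1 ≤ lam) (hgz₀ : g z₀ ≠ 0)
    (hfac : ∀ u ∈ U, f u = (u - z₀) ^ lam * g u) :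
    (∃ C > (0 : ℝ), ∃ ε₀ > (0 : ℝ), ∀ ε : ℝ, 0 < ε → ε < ε₀ →
      ∀ θ ∈ Icc (0 : ℝ) (2 * Real.pi),
        f (z₀ + ε * Complex.exp (θ * Complex.I)) ≠ 0 ∧
        |(Complex.I * ε * Complex.exp (θ * Complex.I) *
            deriv f (z₀ + ε * Complex.exp (θ * Complex.I)) /
            f (z₀ + ε * Complex.exp (θ * Complex.I))).im - lam| ≤ C * ε) ∧
    ∃ ε₁ > (0 : ℝ), ∀ ε : ℝ, 0 < ε → ε < ε₁ →
      ∀ θ ∈ Icc (0 : ℝ) (2 * Real.pi),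
        0 < (Complex.I * ε * Complex.exp (θ * Complex.I) *
            deriv f (z₀ + ε * Complex.exp (θ * Complex.I)) /
            f (z₀ + ε * Complex.exp (θ * Complex.I))).im := by
  set C := ‖logDeriv g z₀‖ + 1
  have hC : 0 < C := by positivity
  obtain ⟨δ, hδ, hball⟩ := Metric.eventually_nhds_iff.1 <| (hU.eventually_mem hz₀).and <|
    eventually_ne_zero_and_norm_logDeriv_lt (hg.analyticAt (hU.mem_nhds hz₀)) hgz₀
  have key : ∀ ε : ℝ, 0 < ε → ε < δ → ∀ θ : ℝ,
      f (z₀ + ε * exp (θ * I)) ≠ 0 ∧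
      |(I * ε * exp (θ * I) * deriv f (z₀ + ε * exp (θ * I)) /
        f (z₀ + ε * exp (θ * I))).im - lam| ≤ C * ε := by
    intro ε hε hεδ θ
    set w : ℂ := ε * exp (θ * I)
    have hw : ‖w‖ = ε := by simp [w, abs_of_pos hε]
    have hw0 : w ≠ 0 := norm_pos_iff.1 (hw ▸ hε)
    obtain ⟨hwU, hgw, hlog⟩ := hball (by simpa [dist_eq_norm, hw] : dist (z₀ + w) z₀ < δ)
    have hfac' : f =ᶠ[𝓝 (z₀ + w)] fun v => (v - z₀) ^ lam * g v :=
      eventually_of_mem (hU.mem_nhds hwU) hfac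
    rw [mul_assoc I]
    refine (ne_zero_and_abs_im_I_mul_deriv_div_sub_le hfac' hw0 hgw
      (hg.differentiableAt (hU.mem_nhds hwU))).imp_right (le_trans · ?_)
    rw [hw, mul_comm]
    gcongr
  refine ⟨⟨C, hC, δ, hδ, fun ε hε hεδ θ _ => key ε hε hεδ θ⟩,
    min δ C⁻¹, lt_min hδ (inv_pos.2 hC), fun ε hε hε₁ θ _ => ?_⟩
  obtain ⟨-, hbound⟩ := key ε hε (hε₁.trans_le (min_le_left _ _)) θ
  have hCε : C * ε < 1 := by
    simpa [hC.ne'] using mul_lt_mul_of_pos_left (hε₁.trans_le (min_le_right _ _)) hC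
  have hlam' : (1 : ℝ) ≤ lam := by exact_mod_cast hlam
  linarith [(abs_le.1 hbound).1]

/-- If `f` is holomorphic near `z₀` with a zero of order `lam ≥ 1` at `z₀`
(i.e. `f u = (u - z₀) ^ lam * g u` with `g` holomorphic and `g z₀ ≠ 0`), then
there are `C > 0`, `ε₀ > 0` such that for all `0 < ε < ε₀` and `θ ∈ [0, 2π]`,
`f (z₀ + ε e^{iθ}) ≠ 0` and
`|Im (i ε e^{iθ} f' (z₀ + ε e^{iθ}) / f (z₀ + ε e^{iθ})) − lam| ≤ C ε`.
In particular, for `ε` small enough this angular derivative of the argument of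
`f` is strictly positive on all of `[0, 2π]`. -/
theorem arg_derivative_near_zero_of_order
    (f g : ℂ → ℂ) (z₀ : ℂ) (U : Set ℂ) (hU : IsOpen U) (hz₀ : z₀ ∈ U)
    (hf : DifferentiableOn ℂ f U) (hg : DifferentiableOn ℂ g U)
    (lam : ℕ) (hlam : 1 ≤ lam) (hgz₀ : g z₀ ≠ 0)
    (hfac : ∀ u ∈ U, f u = (u - z₀) ^ lam * g u) :
    (∃ C > (0 : ℝ), ∃ ε₀ > (0 : ℝ), ∀ ε : ℝ, 0 < ε → ε < ε₀ →
      ∀ θ ∈ Icc (0 : ℝ) (2 * Real.pi),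
        f (z₀ + ε * Complex.exp (θ * Complex.I)) ≠ 0 ∧
        |(Complex.I * ε * Complex.exp (θ * Complex.I) *
            deriv f (z₀ + ε * Complex.exp (θ * Complex.I)) /
            f (z₀ + ε * Complex.exp (θ * Complex.I))).im - lam| ≤ C * ε) ∧
    ∃ ε₁ > (0 : ℝ), ∀ ε : ℝ, 0 < ε → ε < ε₁ →
      ∀ θ ∈ Icc (0 : ℝ) (2 * Real.pi),
        0 < (Complex.I * ε * Complex.exp (θ * Complex.I) *
            deriv f (z₀ + ε * Complex.exp (θ * Complex.I)) /
            f (z₀ + ε * Complex.exp (θ * Complex.I))).im :=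
  arg_derivative_near_zero_of_order_general f g z₀ U hU hz₀ hg lam hlam hgz₀ hfac
end

section
/- Let f be holomorphic and not identically zero on a neighborhood of z₀ ∈ ℂ, with a zero of order λ ≥ 1 at z₀, and let L be a line through the origin. Then for all sufficiently small ε > 0 (small enough that z₀ is the only zero of f in the closed disk of radius ε around z₀), the number of points z on the circle |z − z₀| = ε with f(z) ∈ L is exactly 2λ. -/
/-!
On the circle `z = z₀ + ε e^{iθ}` we have
`f z / w = exp (λ (log ε + iθ) + log (g z / g z₀) + log (g z₀ / w))`, so `f z ∈ ℝ w` exactly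
when `sin A(θ) = 0` for `A(θ) = λθ + arg (g z / g z₀) + arg (g z₀ / w)`. For small `ε` the
quotient `g z / g z₀` stays in the disc of radius `1/2` about `1`, where `log` is `2`-Lipschitz,
so the middle term of `A` is Lipschitz in `θ` with a constant `O(ε) < λ`. Hence `A` is a
continuous, strictly increasing lift of the argument with `A(2π) = A(0) + 2πλ`, and it meets
exactly `2λ` multiples of `π` on `(0, 2π]`.
-/

open Complex Set Metric Topology

theorem ncard_Ioc_inter_range_intCast_mul {c : ℝ} (hc : 0 < c) (x : ℝ) (m : ℕ) :
    (Ioc x (x + m * c) ∩ range fun k : ℤ => k * c).ncard = m := by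
  have hpre : ((fun k : ℤ => (k : ℝ) * c) ⁻¹' Ioc x (x + m * c)) = Ioc ⌊x / c⌋ (⌊x / c⌋ + m) := by
    ext k
    rw [mem_preimage, mem_Ioc, mem_Ioc, Int.floor_lt, div_lt_iff₀ hc, ← sub_le_iff_le_add (a := k),
      Int.le_floor, le_div_iff₀ hc]
    push_cast
    constructor <;> rintro ⟨h₁, h₂⟩ <;> constructor <;> linarith
  have hinj : Function.Injective fun k : ℤ => (k : ℝ) * c := fun k l h => by
    simpa [hc.ne'] using h
  rw [← ncard_preimage_of_injective_subset_range hinj inter_subset_right, preimage_inter,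
    preimage_range, inter_univ, hpre, ← Finset.coe_Ioc, ncard_coe_finset, Int.card_Ioc]
  omega

theorem ncard_Ioc_sin_eq_zero {A : ℝ → ℝ} (hA : StrictMono A) (hA_cont : Continuous A)
    (a b : ℝ) {n : ℕ} (hab : A b = A a + n * Real.pi) :
    {θ | θ ∈ Ioc a b ∧ Real.sin (A θ) = 0}.ncard = n := by
  have hzeros : {θ | θ ∈ Ioc a b ∧ Real.sin (A θ) = 0} =
      Ioc a b ∩ A ⁻¹' range fun k : ℤ => k * Real.pi := by
    ext θ
    simp [Real.sin_eq_zero_iff]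
  rw [hzeros, ← hA.injective.injOn.ncard_image, image_inter_preimage,
    hA_cont.image_Ioc_of_strictMono hA, hab]
  exact ncard_Ioc_inter_range_intCast_mul Real.pi_pos _ n

theorem ncard_sphere_sep_eq_ncard_circleMap (c : ℂ) {R : ℝ} (hR : 0 < R) (p : ℂ → Prop) :
    {z | ‖z - c‖ = R ∧ p z}.ncard = {θ | θ ∈ Ioc 0 (2 * Real.pi) ∧ p (circleMap c R θ)}.ncard := by
  have hinj : InjOn (circleMap c R) (Ioc 0 (2 * Real.pi)) := by
    simpa [uIoc_of_le Real.two_pi_pos.le] using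
      injOn_circleMap_of_abs_sub_le (c := c) hR.ne' (a := 0) (b := 2 * Real.pi)
        (by simp [abs_of_pos Real.two_pi_pos])
  have himage : circleMap c R '' (Ioc 0 (2 * Real.pi) ∩ circleMap c R ⁻¹' {z | p z}) =
      {z | ‖z - c‖ = R ∧ p z} := by
    rw [image_inter_preimage, image_circleMap_Ioc, abs_of_pos hR]
    ext z
    simp
  rw [← himage, (hinj.mono inter_subset_left).ncard_image]
  rfl

theorem exists_ofReal_eq_exp_iff (ζ : ℂ) : (∃ t : ℝ, exp ζ = t) ↔ Real.sin ζ.im = 0 := by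
  constructor
  · rintro ⟨t, ht⟩
    simpa [exp_im, (Real.exp_pos _).ne'] using congrArg im ht
  · intro h
    exact ⟨(exp ζ).re, Complex.ext rfl (by simp [exp_im, h])⟩

theorem circleMap_zero_pow_mul_mem_line_iff {ε θ : ℝ} (hε : 0 < ε) {n : ℕ} {v c w : ℂ}
    (hv : v ≠ 0) (hc : c ≠ 0) (hw : w ≠ 0) :
    (∃ t : ℝ, circleMap 0 ε θ ^ n * (c * v) = t * w) ↔
      Real.sin (n * θ + arg v + arg (c / w)) = 0 := by
  have hexp : circleMap 0 ε θ ^ n * (c * v) / w =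
      exp (n * (Real.log ε + θ * I) + log v + log (c / w)) := by
    rw [exp_add, exp_add, exp_log hv, exp_log (div_ne_zero hc hw), exp_nat_mul, exp_add,
      ← ofReal_exp, Real.exp_log hε, ← circleMap_zero]
    field_simp
  simp_rw [← div_eq_iff hw, hexp, exists_ofReal_eq_exp_iff]
  simp [log_im]

theorem lipschitzOnWith_log_closedBall_one : LipschitzOnWith 2 log (closedBall 1 (1 / 2)) := by
  refine (convex_closedBall _ _).lipschitzOnWith_of_nnnorm_hasDerivWithin_le
    (f' := fun z => z⁻¹) (fun z hz => ?_) (fun z hz => ?_)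
  · have hslit : z ∈ slitPlane :=
      ball_one_subset_slitPlane (closedBall_subset_ball (by norm_num) hz)
    exact (hasDerivAt_log hslit).hasDerivWithinAt
  · have hz' : ‖z - 1‖ ≤ 1 / 2 := mem_closedBall_iff_norm.1 hz
    have h : 1 / 2 ≤ ‖z‖ := by
      have := norm_sub_norm_le (1 : ℂ) z
      rw [norm_sub_rev, norm_one] at this
      linarith
    rw [← NNReal.coe_le_coe, coe_nnnorm, norm_inv]
    push_cast
    rw [inv_le_comm₀ (by linarith) two_pos]
    linarith

theorem LipschitzWith.strictMono_mul_add {β : ℝ → ℝ} {K : NNReal} (hβ : LipschitzWith K β)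
    {a : ℝ} (hK : K < a) : StrictMono fun x => a * x + β x := by
  intro x y hxy
  have h := hβ.dist_le_mul y x
  rw [Real.dist_eq, Real.dist_eq, abs_of_pos (sub_pos.2 hxy)] at h
  have := neg_abs_le (β y - β x)
  nlinarith

theorem LipschitzOnWith.arg_comp_circleMap {u : ℂ → ℂ} {z₀ : ℂ} {ε : ℝ} {K : NNReal}
    (hu : LipschitzOnWith K u (sphere z₀ ε)) (hε : 0 ≤ ε)
    (hu_near : MapsTo u (sphere z₀ ε) (closedBall 1 (1 / 2))) :
    LipschitzWith (2 * K * Real.nnabs ε) fun θ => arg (u (circleMap z₀ ε θ)) := by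
  have hZ : MapsTo (circleMap z₀ ε) univ (sphere z₀ ε) := fun θ _ => circleMap_mem_sphere z₀ hε θ
  have := (RCLike.lipschitzWith_im.lipschitzOnWith (s := univ)).comp
    (lipschitzOnWith_log_closedBall_one.comp
      (hu.comp ((lipschitzWith_circleMap z₀ ε).lipschitzOnWith (s := univ)) hZ)
      (hu_near.comp hZ)) (mapsTo_univ _ _)
  rw [lipschitzOnWith_univ, one_mul, ← mul_assoc] at this
  simpa [Function.comp_def, log_im] using this

theorem ContDiffAt.exists_closedBall_lipschitzOnWith_mapsTo {𝕂 E F : Type*} [RCLike 𝕂]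
    [NormedAddCommGroup E] [NormedSpace 𝕂 E] [NormedAddCommGroup F] [NormedSpace 𝕂 F]
    {g : E → F} {x : E} (hg : ContDiffAt 𝕂 1 g x) {s : Set E} (hs : s ∈ 𝓝 x) {δ : ℝ}
    (hδ : 0 < δ) :
    ∃ r > 0, ∃ K, closedBall x r ⊆ s ∧ LipschitzOnWith K g (closedBall x r) ∧
      MapsTo g (closedBall x r) (closedBall (g x) δ) := by
  obtain ⟨K, t, ht, hK⟩ := hg.exists_lipschitzOnWith
  have hmem : s ∩ t ∩ g ⁻¹' closedBall (g x) δ ∈ 𝓝 x :=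
    Filter.inter_mem (Filter.inter_mem hs ht)
      (hg.continuousAt.preimage_mem_nhds (closedBall_mem_nhds _ hδ))
  obtain ⟨r, hr, hsub⟩ := nhds_basis_closedBall.mem_iff.1 hmem
  exact ⟨r, hr, K, fun z hz => (hsub hz).1.1, hK.mono fun z hz => (hsub hz).1.2,
    fun z hz => (hsub hz).2⟩

theorem ncard_sphere_preimage_line {f g : ℂ → ℂ} {z₀ c w : ℂ} {ε : ℝ} {n : ℕ} {K : NNReal}
    (hε : 0 < ε) (hw : w ≠ 0) (hfac : ∀ z ∈ sphere z₀ ε, f z = (z - z₀) ^ n * g z)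
    (hg : LipschitzOnWith K g (sphere z₀ ε))
    (hg_near : MapsTo g (sphere z₀ ε) (closedBall c (‖c‖ / 2)))
    (hK : 2 * K * ε < n * ‖c‖) :
    {z : ℂ | ‖z - z₀‖ = ε ∧ ∃ t : ℝ, f z = t * w}.ncard = 2 * n := by
  have hc : c ≠ 0 := by
    rintro rfl
    rw [norm_zero, mul_zero] at hK
    exact hK.not_ge (by positivity)
  set u : ℂ → ℂ := fun z => c⁻¹ * g z
  have hu_near : MapsTo u (sphere z₀ ε) (closedBall 1 (1 / 2)) := by
    intro z hz
    have : ‖g z - c‖ ≤ ‖c‖ / 2 := mem_closedBall_iff_norm.1 (hg_near hz)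
    rw [mem_closedBall_iff_norm, show u z - 1 = c⁻¹ * (g z - c) by simp [u, mul_sub, hc],
      norm_mul, norm_inv, inv_mul_le_iff₀ (norm_pos_iff.2 hc)]
    linarith
  have hZ : ∀ θ, circleMap z₀ ε θ ∈ sphere z₀ ε := circleMap_mem_sphere z₀ hε.le
  set A : ℝ → ℝ := fun θ => n * θ + arg (u (circleMap z₀ ε θ)) + arg (c / w)
  have hline : ∀ θ, (∃ t : ℝ, f (circleMap z₀ ε θ) = t * w) ↔ Real.sin (A θ) = 0 := by
    intro θ
    have hu0 : u (circleMap z₀ ε θ) ≠ 0 :=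
      slitPlane_ne_zero (ball_one_subset_slitPlane
        (closedBall_subset_ball (by norm_num) (hu_near (hZ θ))))
    have hg_eq : g (circleMap z₀ ε θ) = c * u (circleMap z₀ ε θ) := by simp [u, hc]
    rw [← circleMap_zero_pow_mul_mem_line_iff hε hu0 hc hw, hfac _ (hZ θ), hg_eq,
      circleMap_sub_center]
  have hβ : LipschitzWith (2 * (‖c⁻¹‖₊ * K) * Real.nnabs ε)
      fun θ => arg (u (circleMap z₀ ε θ)) :=
    (((lipschitzWith_smul c⁻¹).lipschitzOnWith (s := univ)).comp hg
      (mapsTo_univ _ _)).arg_comp_circleMap hε.le hu_near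
  have hβ_lt : ((2 * (‖c⁻¹‖₊ * K) * Real.nnabs ε : NNReal) : ℝ) < n := by
    have hc' : 0 < ‖c‖ := norm_pos_iff.2 hc
    push_cast [Real.coe_nnabs, abs_of_pos hε, norm_inv]
    calc _ = 2 * K * ε / ‖c‖ := by ring
      _ < n := (div_lt_iff₀ hc').2 hK
  have hA : StrictMono A := (hβ.strictMono_mul_add hβ_lt).add_const _
  have hA_cont : Continuous A := by
    have := hβ.continuous
    fun_prop
  have hA_period : A (2 * Real.pi) = A 0 + (2 * n : ℕ) * Real.pi := by
    have h2π : circleMap z₀ ε (2 * Real.pi) = circleMap z₀ ε 0 := by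
      simpa using periodic_circleMap z₀ ε 0
    simp only [A, h2π]
    push_cast
    ring
  rw [ncard_sphere_sep_eq_ncard_circleMap z₀ hε]
  simp_rw [hline]
  exact ncard_Ioc_sin_eq_zero hA hA_cont 0 _ hA_period

theorem circle_line_preimage_count_at_zero_general
    (f g : ℂ → ℂ) (z₀ : ℂ) (U : Set ℂ) (hU : IsOpen U) (hz₀ : z₀ ∈ U)
    (hg : DifferentiableOn ℂ g U)
    (lam : ℕ) (hlam : 1 ≤ lam) (hgz₀ : g z₀ ≠ 0)
    (hfac : ∀ u ∈ U, f u = (u - z₀) ^ lam * g u)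
    (w : ℂ) (hw : w ≠ 0) :
    ∃ ε₀ > (0 : ℝ), ∀ ε : ℝ, 0 < ε → ε < ε₀ →
      Metric.closedBall z₀ ε ⊆ U ∧
      (∀ z ∈ Metric.closedBall z₀ ε, f z = 0 → z = z₀) ∧
      Set.ncard {z : ℂ | ‖z - z₀‖ = ε ∧ ∃ t : ℝ, f z = t * w} = 2 * lam := by
  have hgz₀' : 0 < ‖g z₀‖ := norm_pos_iff.2 hgz₀
  have hg_C1 : ContDiffAt ℂ 1 g z₀ := (hg.analyticAt (hU.mem_nhds hz₀)).contDiffAt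
  obtain ⟨r, hr, K, hrU, hK, hg_near⟩ :=
    hg_C1.exists_closedBall_lipschitzOnWith_mapsTo (hU.mem_nhds hz₀) (half_pos hgz₀')
  refine ⟨min r (‖g z₀‖ / (2 * K + 1)), lt_min hr (by positivity), fun ε hε hεε₀ => ?_⟩
  have hεr : closedBall z₀ ε ⊆ closedBall z₀ r :=
    closedBall_subset_closedBall (hεε₀.trans_le (min_le_left _ _)).le
  have hsphere : sphere z₀ ε ⊆ closedBall z₀ r := sphere_subset_closedBall.trans hεr
  refine ⟨hεr.trans hrU, fun z hz hfz => ?_, ?_⟩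
  · have hgz : g z ≠ 0 := by
      intro h0
      have := hg_near (hεr hz)
      rw [h0, mem_closedBall_iff_norm, zero_sub, norm_neg] at this
      linarith
    rw [hfac z (hrU (hεr hz)), mul_eq_zero, pow_eq_zero_iff (by omega), sub_eq_zero] at hfz
    exact hfz.resolve_right hgz
  · refine ncard_sphere_preimage_line hε hw (fun z hz => hfac z (hrU (hsphere hz)))
      (hK.mono hsphere) (hg_near.mono_left hsphere) ?_
    have hεK : ε * (2 * K + 1) < ‖g z₀‖ :=
      (lt_div_iff₀ (by positivity)).1 (hεε₀.trans_le (min_le_right _ _))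
    have hlam' : (1 : ℝ) ≤ lam := by exact_mod_cast hlam
    nlinarith

/-- If `f` is holomorphic near `z₀` with a zero of order `lam ≥ 1` at `z₀`
(i.e. `f u = (u - z₀) ^ lam * g u` with `g` holomorphic and `g z₀ ≠ 0`), and `L`
is the line `{t • w : t ∈ ℝ}` through the origin (`w ≠ 0`), then for all
sufficiently small `ε > 0` (small enough that the closed disk of radius `ε`
around `z₀` lies in the domain and contains no zero of `f` other than `z₀`),
the number of points `z` on the circle `|z − z₀| = ε` with `f z ∈ L` is exactly
`2 * lam`. -/
theorem circle_line_preimage_count_at_zero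
    (f g : ℂ → ℂ) (z₀ : ℂ) (U : Set ℂ) (hU : IsOpen U) (hz₀ : z₀ ∈ U)
    (hf : DifferentiableOn ℂ f U) (hg : DifferentiableOn ℂ g U)
    (lam : ℕ) (hlam : 1 ≤ lam) (hgz₀ : g z₀ ≠ 0)
    (hfac : ∀ u ∈ U, f u = (u - z₀) ^ lam * g u)
    (w : ℂ) (hw : w ≠ 0) :
    ∃ ε₀ > (0 : ℝ), ∀ ε : ℝ, 0 < ε → ε < ε₀ →
      Metric.closedBall z₀ ε ⊆ U ∧
      (∀ z ∈ Metric.closedBall z₀ ε, f z = 0 → z = z₀) ∧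
      Set.ncard {z : ℂ | ‖z - z₀‖ = ε ∧ ∃ t : ℝ, f z = t * w} = 2 * lam :=
  circle_line_preimage_count_at_zero_general f g z₀ U hU hz₀ hg lam hlam hgz₀ hfac w hw
end

section
/- Let n ≥ 2 be an even natural number and let f(z) = (z + 1)^n. Then the number of θ ∈ [0, 2π) such that f(e^{iθ}) is real (i.e. Im((e^{iθ} + 1)^n) = 0) is exactly n. (Since f has no zeros in the open unit disk and a single zero of multiplicity n on the unit circle at z = −1, this shows the bound 2m + λ of the main theorem is attained.) -/
/-!
Squaring removes the half angle: `(e^{iθ} + 1)² = (2 + 2 cos θ) e^{iθ}`, so for `n = 2m`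
the imaginary part of `(e^{iθ} + 1)^n` is `(2 + 2 cos θ)^m sin (m θ)`. The first factor only
vanishes at `cos θ = -1`, where `sin (m θ)` vanishes as well, so the zeros in `[0, 2π)` are
exactly those of `sin (m θ)`, namely the `2m` points `k π / m`.
-/

open Complex Set

lemma exp_mul_I_add_one_sq (θ : ℝ) :
    (exp (θ * I) + 1) ^ 2 = ((2 + 2 * Real.cos θ : ℝ) : ℂ) * exp (θ * I) := by
  have h : exp (-(θ * I)) * exp (θ * I) = 1 := by rw [← exp_add, neg_add_cancel, exp_zero]
  push_cast
  rw [Complex.cos, neg_mul]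
  linear_combination -h

lemma im_exp_mul_I_add_one_pow_two_mul (m : ℕ) (θ : ℝ) :
    ((exp (θ * I) + 1) ^ (2 * m)).im = (2 + 2 * Real.cos θ) ^ m * Real.sin (m * θ) := by
  rw [pow_mul, exp_mul_I_add_one_sq, mul_pow, ← ofReal_pow, ← exp_nat_mul,
    show (m : ℂ) * (θ * I) = ((m * θ : ℝ) : ℂ) * I by push_cast; ring,
    im_ofReal_mul, exp_ofReal_mul_I_im]

lemma Real.sin_nat_mul_eq_zero_of_cos_eq_neg_one {θ : ℝ} (h : Real.cos θ = -1) (m : ℕ) :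
    Real.sin (m * θ) = 0 := by
  have hsin : Real.sin θ = 0 := by nlinarith [Real.sin_sq_add_cos_sq θ]
  obtain ⟨k, rfl⟩ := Real.sin_eq_zero_iff.1 hsin
  rw [← mul_assoc, show (m : ℝ) * k = ((m * k : ℤ) : ℝ) by push_cast; ring]
  exact Real.sin_int_mul_pi _

lemma im_exp_mul_I_add_one_pow_two_mul_eq_zero_iff {m : ℕ} (hm : m ≠ 0) (θ : ℝ) :
    ((exp (θ * I) + 1) ^ (2 * m)).im = 0 ↔ Real.sin (m * θ) = 0 := by
  rw [im_exp_mul_I_add_one_pow_two_mul, mul_eq_zero, pow_eq_zero_iff hm]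
  refine ⟨?_, Or.inr⟩
  rintro (h | h)
  · exact Real.sin_nat_mul_eq_zero_of_cos_eq_neg_one (by linarith) m
  · exact h

lemma setOf_sin_nat_mul_eq_zero_Ico {m : ℕ} (hm : m ≠ 0) :
    {θ : ℝ | θ ∈ Ico 0 (2 * Real.pi) ∧ Real.sin (m * θ) = 0}
      = (fun k : ℕ => k * Real.pi / m) '' ↑(Finset.range (2 * m)) := by
  have hmR : (0 : ℝ) < m := by positivity
  have hπ := Real.pi_pos
  ext θ
  simp only [mem_ofPred_eq, mem_Ico, Finset.coe_range, mem_image, mem_Iio]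
  constructor
  · rintro ⟨⟨h0, h2π⟩, hsin⟩
    obtain ⟨k, hk⟩ := Real.sin_eq_zero_iff.1 hsin
    have hk0 : (0 : ℝ) ≤ k := by nlinarith [mul_nonneg hmR.le h0]
    have hk2m : (k : ℝ) < 2 * m := by nlinarith
    lift k to ℕ using (by exact_mod_cast hk0)
    refine ⟨k, by exact_mod_cast hk2m, ?_⟩
    rw [div_eq_iff hmR.ne']
    push_cast at hk
    linarith
  · rintro ⟨k, hk, rfl⟩
    have hkR : (k : ℝ) < 2 * m := by exact_mod_cast hk
    refine ⟨⟨by positivity, ?_⟩, ?_⟩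
    · rw [div_lt_iff₀ hmR]
      nlinarith
    · rw [mul_div_cancel₀ _ hmR.ne']
      exact Real.sin_nat_mul_pi k

lemma ncard_setOf_sin_nat_mul_eq_zero_Ico {m : ℕ} (hm : m ≠ 0) :
    {θ : ℝ | θ ∈ Ico 0 (2 * Real.pi) ∧ Real.sin (m * θ) = 0}.ncard = 2 * m := by
  have hinj : InjOn (fun k : ℕ => k * Real.pi / m) ↑(Finset.range (2 * m)) := by
    intro x _ y _ hxy
    have := Real.pi_pos
    field_simp at hxy
    exact_mod_cast hxy
  rw [setOf_sin_nat_mul_eq_zero_Ico hm, hinj.ncard_image, ncard_coe_finset, Finset.card_range]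

/-- For an even `n ≥ 2`, the number of `θ ∈ [0, 2π)` with
`Im ((e^{iθ} + 1) ^ n) = 0` is exactly `n`.  (With `f z = (z+1)^n`, which has no
zeros in the open unit disk and a single zero of multiplicity `n` on the unit
circle, this shows the bound `2m + λ` of the main theorem is attained.) -/
theorem exp_add_one_pow_real_count (n : ℕ) (hn : 2 ≤ n) (heven : Even n) :
    Set.ncard {θ : ℝ | θ ∈ Ico 0 (2 * Real.pi) ∧
      ((Complex.exp (θ * Complex.I) + 1) ^ n).im = 0} = n := by
  obtain ⟨m, rfl⟩ := heven
  have hm : m ≠ 0 := by omega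
  rw [← two_mul] at *
  simp_rw [im_exp_mul_I_add_one_pow_two_mul_eq_zero_iff hm]
  exact ncard_setOf_sin_nat_mul_eq_zero_Ico hm
end
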